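/- Let F₂ be the free group on two generators a, b, let ρ : F₂ → SL(2,ℝ) be a homomorphism, and let φ be an automorphism of F₂. If the triple (Tr ρ(a), Tr ρ(b), Tr ρ(a·b)) lies in V — i.e. two of its coordinates are 0 and the third has absolute value greater than 2 — then the triple (Tr ρ(φ(a)), Tr ρ(φ(b)), Tr ρ(φ(a·b))) also lies in V. -/

import Mathlib

/-- The trace of an element of SL(2,ℝ), viewed as a 2×2 real matrix. -/
def trSL (g : Matrix.SpecialLinearGroup (Fin 2) ℝ) : ℝ :=
  Matrix.trace (g : Matrix (Fin 2) (Fin 2) ℝ)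

/-- `(x,y,z) ∈ V` iff two of the coordinates are `0` and the third has absolute
value greater than `2`. -/
def memV (x y z : ℝ) : Prop :=
  (x = 0 ∧ y = 0 ∧ 2 < |z|) ∨ (x = 0 ∧ z = 0 ∧ 2 < |y|) ∨ (y = 0 ∧ z = 0 ∧ 2 < |x|)

/-!
If `tr P = tr (P C) = 0` in `SL(2,ℝ)`, then `P² = (P C)² = -1`, so `P` conjugates `C` to `C⁻¹`
and every element of `⟨P, C⟩` has the form `C^k P^n`. For odd `n` its square is `-1`, so its trace
is `0`; for even `n` it is `±C^k`. If moreover `|tr C| > 2`, the recursion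
`tr C^(n+2) = tr C · tr C^(n+1) - tr C^n` keeps `|tr C^k| > 2` for all `k ≠ 0`.

Each point of `V` exhibits `ρ(F₂)` as such a group `⟨P, C⟩`, with `(P, C)` one of `(ρa, ρ(ab))`,
`(ρa, ρb)`, `(ρb, ρa)`; it is not abelian, as `C² ≠ 1`.
Another generating pair `A = C^k P^n`, `B = C^m P^l` therefore does not commute, which excludes
`n, l` both even, `k = 0` when only `l` is odd, `m = 0` when only `n` is odd, and `k = m` when both
are odd; in each remaining case `(tr A, tr B, tr AB)` lies in `V`.
-/

open MatrixGroups

section SL2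

variable (g h : SL(2, ℝ))

theorem trSL_one : trSL 1 = 2 := by
  simp [trSL]

theorem trSL_neg : trSL (-g) = -trSL g := by
  simp [trSL]

theorem trSL_inv : trSL g⁻¹ = trSL g := by
  simp [trSL, Matrix.adjugate_fin_two, Matrix.trace_fin_two, add_comm]

theorem trSL_mul_comm : trSL (g * h) = trSL (h * g) :=
  Matrix.trace_mul_comm (g : Matrix (Fin 2) (Fin 2) ℝ) h

theorem coe_mul_self_eq_trSL_smul_sub_one :
    (g : Matrix (Fin 2) (Fin 2) ℝ) * g = trSL g • (g : Matrix (Fin 2) (Fin 2) ℝ) - 1 := by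
  have hCH := Matrix.aeval_self_charpoly (g : Matrix (Fin 2) (Fin 2) ℝ)
  rw [Matrix.charpoly_fin_two, g.2] at hCH
  simp only [map_add, map_sub, map_mul, map_pow, Polynomial.aeval_X, Polynomial.aeval_C,
    map_one] at hCH
  rw [← sub_eq_zero, ← hCH, Algebra.smul_def, sq, trSL]
  abel

theorem mul_self_eq_neg_one_iff_trSL_eq_zero : g * g = -1 ↔ trSL g = 0 := by
  refine Subtype.ext_iff.trans ?_
  rw [Matrix.SpecialLinearGroup.coe_mul, Matrix.SpecialLinearGroup.coe_neg,
    Matrix.SpecialLinearGroup.coe_one, coe_mul_self_eq_trSL_smul_sub_one, sub_eq_neg_self,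
    smul_eq_zero, or_iff_left fun h0 ↦ by simpa [h0] using g.2]

theorem trSL_pow_add_two (n : ℕ) :
    trSL (g ^ (n + 2)) = trSL g * trSL (g ^ (n + 1)) - trSL (g ^ n) := by
  have hcoe : ((g ^ (n + 2) : SL(2, ℝ)) : Matrix (Fin 2) (Fin 2) ℝ) =
      trSL g • ((g ^ (n + 1) : SL(2, ℝ)) : Matrix (Fin 2) (Fin 2) ℝ) - (g ^ n : SL(2, ℝ)) := by
    rw [pow_succ, pow_succ, mul_assoc, Matrix.SpecialLinearGroup.coe_mul,
      Matrix.SpecialLinearGroup.coe_mul, coe_mul_self_eq_trSL_smul_sub_one, mul_sub, mul_smul_comm,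
      mul_one, ← Matrix.SpecialLinearGroup.coe_mul, ← pow_succ]
  simp only [trSL, hcoe, Matrix.trace_sub, Matrix.trace_smul, smul_eq_mul]

theorem strictMono_abs_trSL_pow (hg : 2 < |trSL g|) : StrictMono fun n : ℕ ↦ |trSL (g ^ n)| := by
  refine strictMono_nat_of_lt_succ fun n ↦ ?_
  induction n with
  | zero => simpa [trSL_one] using hg
  | succ n ih =>
    calc |trSL (g ^ (n + 1))|
        < |trSL g| * |trSL (g ^ (n + 1))| - |trSL (g ^ n)| := by
          nlinarith [abs_nonneg (trSL (g ^ n))]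
      _ ≤ |trSL g * trSL (g ^ (n + 1)) - trSL (g ^ n)| := by
          rw [← abs_mul]; exact abs_sub_abs_le_abs_sub _ _
      _ = |trSL (g ^ (n + 2))| := by rw [trSL_pow_add_two]

theorem two_lt_abs_trSL_zpow (hg : 2 < |trSL g|) {k : ℤ} (hk : k ≠ 0) : 2 < |trSL (g ^ k)| := by
  have hpow : ∀ n : ℕ, n ≠ 0 → 2 < |trSL (g ^ n)| := fun n hn ↦ by
    simpa [trSL_one] using strictMono_abs_trSL_pow g hg (Nat.pos_of_ne_zero hn)
  obtain ⟨n, rfl | rfl⟩ := Int.eq_nat_or_neg k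
  · exact_mod_cast hpow n (by exact_mod_cast hk)
  · rw [zpow_neg, trSL_inv, zpow_natCast]
    exact hpow n (by simpa using hk)

end SL2

section Dihedral

variable {G : Type*} [Group G]

theorem closure_pair_mul_right (a b : G) :
    Subgroup.closure {a, a * b} = Subgroup.closure {a, b} := by
  apply le_antisymm <;>
    rw [Subgroup.closure_le, Set.insert_subset_iff, Set.singleton_subset_iff] <;>
    refine ⟨Subgroup.subset_closure (by simp), ?_⟩
  · exact mul_mem (Subgroup.subset_closure (by simp)) (Subgroup.subset_closure (by simp))
  · simpa using mul_mem (inv_mem (Subgroup.subset_closure (Set.mem_insert a {a * b})))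
      (Subgroup.subset_closure (Set.mem_insert_of_mem a rfl))

theorem commute_of_mem_closure_pair {a b x y : G} (hab : Commute a b)
    (hx : x ∈ Subgroup.closure {a, b}) (hy : y ∈ Subgroup.closure {a, b}) : Commute x y := by
  have : IsMulCommutative (Subgroup.closure {a, b}) := Subgroup.isMulCommutative_closure <| by
    rintro u (rfl | rfl) v (rfl | rfl)
    exacts [rfl, hab, hab.symm, rfl]
  exact setLike_mul_comm hx hy

theorem closure_pair_eq_range (ψ : FreeGroup (Fin 2) →* G) :
    Subgroup.closure {ψ (FreeGroup.of 0), ψ (FreeGroup.of 1)} = ψ.range := by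
  rw [MonoidHom.range_eq_map, ← FreeGroup.closure_range_of, MonoidHom.map_closure, ← Set.range_comp]
  congr 1
  ext
  simp [Fin.exists_fin_two, eq_comm]

variable {P C : G}

theorem not_commute_of_closure_eq (h : SemiconjBy P C C⁻¹) (hC : C ^ 2 ≠ 1) {A B : G}
    (hcl : Subgroup.closure {A, B} = Subgroup.closure {P, C}) : ¬Commute A B := by
  intro hAB
  have hPC : Commute P C := commute_of_mem_closure_pair hAB
    (hcl ▸ Subgroup.subset_closure (Set.mem_insert P {C}))
    (hcl ▸ Subgroup.subset_closure (Set.mem_insert_of_mem P rfl))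
  refine hC ?_
  rw [sq, mul_eq_one_iff_eq_inv]
  exact mul_right_cancel (hPC.eq.symm.trans h.eq)

theorem commute_zpow_of_even (h : SemiconjBy P C C⁻¹) {n : ℤ} (hn : Even n) (k : ℤ) :
    Commute (P ^ n) (C ^ k) := by
  have hsq : Commute (P * P) C := (by simpa using h.inv_right : SemiconjBy P C⁻¹ C).mul_left h
  obtain ⟨j, rfl⟩ := hn
  rw [zpow_add, ← (Commute.refl P).mul_zpow]
  exact (hsq.zpow_left j).zpow_right k

theorem semiconjBy_zpow_of_odd (h : SemiconjBy P C C⁻¹) {n : ℤ} (hn : Odd n) (k : ℤ) :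
    SemiconjBy (P ^ n) (C ^ k) (C ^ (-k)) := by
  obtain ⟨j, rfl⟩ := hn
  rw [zpow_add_one]
  exact SemiconjBy.mul_left (commute_zpow_of_even h (even_two_mul j) (-k))
    (by simpa [inv_zpow'] using h.zpow_right k)

theorem zpow_mul_zpow_mul_of_even (h : SemiconjBy P C C⁻¹) {n : ℤ} (hn : Even n) (k m l : ℤ) :
    C ^ k * P ^ n * (C ^ m * P ^ l) = C ^ (k + m) * P ^ (n + l) := by
  rw [mul_assoc, ← mul_assoc (P ^ n), (commute_zpow_of_even h hn m).eq]
  simp only [zpow_add, mul_assoc]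

theorem zpow_mul_zpow_mul_of_odd (h : SemiconjBy P C C⁻¹) {n : ℤ} (hn : Odd n) (k m l : ℤ) :
    C ^ k * P ^ n * (C ^ m * P ^ l) = C ^ (k - m) * P ^ (n + l) := by
  rw [mul_assoc, ← mul_assoc (P ^ n), (semiconjBy_zpow_of_odd h hn m).eq]
  simp only [sub_eq_add_neg, zpow_add, mul_assoc]

theorem exists_eq_zpow_mul_zpow_of_mem_closure (h : SemiconjBy P C C⁻¹) {g : G}
    (hg : g ∈ Subgroup.closure {P, C}) : ∃ k n : ℤ, g = C ^ k * P ^ n := by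
  induction hg using Subgroup.closure_induction_left with
  | one => exact ⟨0, 0, by simp⟩
  | mul_left x hx y _ ih =>
    obtain ⟨k, n, rfl⟩ := ih
    rcases hx with rfl | rfl
    · exact ⟨0 - k, 1 + n, by simpa using zpow_mul_zpow_mul_of_odd h odd_one 0 k n⟩
    · exact ⟨1 + k, 0 + n, by simpa using zpow_mul_zpow_mul_of_even h Even.zero 1 k n⟩
  | inv_mul_cancel x hx y _ ih =>
    obtain ⟨k, n, rfl⟩ := ih
    rcases hx with rfl | rfl
    · exact ⟨0 - k, -1 + n, by simpa using zpow_mul_zpow_mul_of_odd h (n := -1) (by decide) 0 k n⟩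
    · exact ⟨-1 + k, 0 + n, by simpa using zpow_mul_zpow_mul_of_even h Even.zero (-1) k n⟩

end Dihedral

section Reflections

variable {P C : SL(2, ℝ)}

theorem semiconjBy_inv_of_mul_self_eq_neg_one (hP : P * P = -1) (hPC : P * C * (P * C) = -1) :
    SemiconjBy P C C⁻¹ := by
  have hPinv : P⁻¹ = -P := inv_eq_of_mul_eq_one_right (by rw [mul_neg, hP, neg_neg])
  rw [SemiconjBy, eq_inv_mul_iff_mul_eq]
  calc C * (P * C) = P⁻¹ * (P * C * (P * C)) := by group
    _ = P := by rw [hPC, hPinv, mul_neg_one, neg_neg]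

theorem trSL_zpow_mul_zpow_of_odd (hP : P * P = -1) (h : SemiconjBy P C C⁻¹) {n : ℤ} (hn : Odd n)
    (k : ℤ) : trSL (C ^ k * P ^ n) = 0 := by
  rw [← mul_self_eq_neg_one_iff_trSL_eq_zero, zpow_mul_zpow_mul_of_odd h hn, sub_self, zpow_zero,
    one_mul, zpow_add, ← (Commute.refl P).mul_zpow, hP, hn.neg_one_zpow]

theorem abs_trSL_mul_zpow_of_even (hP : P * P = -1) (g : SL(2, ℝ)) {n : ℤ} (hn : Even n) :
    |trSL (g * P ^ n)| = |trSL g| := by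
  obtain ⟨j, rfl⟩ := hn
  rw [zpow_add, ← (Commute.refl P).mul_zpow, hP]
  rcases Int.even_or_odd j with hj | hj
  · rw [hj.neg_one_zpow, mul_one]
  · rw [hj.neg_one_zpow, mul_neg_one, trSL_neg, abs_neg]

theorem memV_trSL_of_closure_eq_of_trSL_eq_zero (hP : trSL P = 0) (hPC : trSL (P * C) = 0)
    (hC : 2 < |trSL C|) {A B : SL(2, ℝ)} (hcl : Subgroup.closure {A, B} = Subgroup.closure {P, C}) :
    memV (trSL A) (trSL B) (trSL (A * B)) := by
  have hP2 : P * P = -1 := (mul_self_eq_neg_one_iff_trSL_eq_zero P).2 hP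
  have h : SemiconjBy P C C⁻¹ :=
    semiconjBy_inv_of_mul_self_eq_neg_one hP2 ((mul_self_eq_neg_one_iff_trSL_eq_zero _).2 hPC)
  have hAB : ¬Commute A B := not_commute_of_closure_eq h
    (fun hC2 ↦ by simpa [hC2, trSL_one] using two_lt_abs_trSL_zpow C hC (two_ne_zero (α := ℤ))) hcl
  have mem : ∀ g ∈ Subgroup.closure {A, B}, ∃ k n : ℤ, g = C ^ k * P ^ n := fun g hg ↦
    exists_eq_zpow_mul_zpow_of_mem_closure h (hcl ▸ hg)
  obtain ⟨k, n, rfl⟩ := mem A (Subgroup.subset_closure (Set.mem_insert A {B}))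
  obtain ⟨m, l, rfl⟩ := mem B (Subgroup.subset_closure (Set.mem_insert_of_mem _ rfl))
  rcases Int.even_or_odd n with hn | hn <;> rcases Int.even_or_odd l with hl | hl
  · refine absurd ?_ hAB
    rw [Commute, SemiconjBy, zpow_mul_zpow_mul_of_even h hn, zpow_mul_zpow_mul_of_even h hl,
      add_comm k, add_comm n]
  · have hk : k ≠ 0 := by
      rintro rfl
      refine hAB ?_
      rw [Commute, SemiconjBy, zpow_mul_zpow_mul_of_even h hn, zpow_mul_zpow_mul_of_odd h hl,
        zero_add, sub_zero, add_comm n]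
    refine Or.inr (Or.inr ⟨trSL_zpow_mul_zpow_of_odd hP2 h hl m, ?_, ?_⟩)
    · rw [zpow_mul_zpow_mul_of_even h hn]
      exact trSL_zpow_mul_zpow_of_odd hP2 h (hn.add_odd hl) _
    · rw [abs_trSL_mul_zpow_of_even hP2 _ hn]
      exact two_lt_abs_trSL_zpow C hC hk
  · have hm : m ≠ 0 := by
      rintro rfl
      refine hAB ?_
      rw [Commute, SemiconjBy, zpow_mul_zpow_mul_of_odd h hn, zpow_mul_zpow_mul_of_even h hl,
        zero_add, sub_zero, add_comm n]
    refine Or.inr (Or.inl ⟨trSL_zpow_mul_zpow_of_odd hP2 h hn k, ?_, ?_⟩)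
    · rw [zpow_mul_zpow_mul_of_odd h hn]
      exact trSL_zpow_mul_zpow_of_odd hP2 h (hn.add_even hl) _
    · rw [abs_trSL_mul_zpow_of_even hP2 _ hl]
      exact two_lt_abs_trSL_zpow C hC hm
  · have hkm : k - m ≠ 0 := by
      intro hkm
      refine hAB ?_
      rw [Commute, SemiconjBy, zpow_mul_zpow_mul_of_odd h hn, zpow_mul_zpow_mul_of_odd h hl,
        hkm, ← neg_sub, hkm, neg_zero, add_comm n]
    refine Or.inl ⟨trSL_zpow_mul_zpow_of_odd hP2 h hn k, trSL_zpow_mul_zpow_of_odd hP2 h hl m, ?_⟩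
    rw [zpow_mul_zpow_mul_of_odd h hn, abs_trSL_mul_zpow_of_even hP2 _ (hn.add_odd hl)]
    exact two_lt_abs_trSL_zpow C hC hkm

end Reflections

theorem memV_trSL_of_closure_eq_of_memV {A B A' B' : SL(2, ℝ)}
    (hcl : Subgroup.closure {A', B'} = Subgroup.closure {A, B})
    (hV : memV (trSL A) (trSL B) (trSL (A * B))) :
    memV (trSL A') (trSL B') (trSL (A' * B')) := by
  rcases hV with ⟨hA, hB, hAB⟩ | ⟨hA, hAB, hB⟩ | ⟨hB, hAB, hA⟩
  · refine memV_trSL_of_closure_eq_of_trSL_eq_zero hA ?_ hAB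
      (hcl.trans (closure_pair_mul_right A B).symm)
    rw [← mul_assoc, (mul_self_eq_neg_one_iff_trSL_eq_zero A).2 hA, neg_one_mul, trSL_neg, hB,
      neg_zero]
  · exact memV_trSL_of_closure_eq_of_trSL_eq_zero hA hAB hB hcl
  · exact memV_trSL_of_closure_eq_of_trSL_eq_zero hB (by rwa [trSL_mul_comm]) hA
      (hcl.trans (congrArg _ (Set.pair_comm A B)))

/-- If the character triple `(Tr ρ(a), Tr ρ(b), Tr ρ(a·b))` of a homomorphism
`ρ : F₂ → SL(2,ℝ)` lies in `V`, then so does the character triple with respect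
to any other free basis, i.e. `(Tr ρ(φ a), Tr ρ(φ b), Tr ρ(φ (a·b)))` for any
automorphism `φ` of `F₂`. -/
theorem stmt17 (ρ : FreeGroup (Fin 2) →* Matrix.SpecialLinearGroup (Fin 2) ℝ)
    (φ : MulAut (FreeGroup (Fin 2)))
    (hV : memV (trSL (ρ (FreeGroup.of 0))) (trSL (ρ (FreeGroup.of 1)))
      (trSL (ρ (FreeGroup.of 0 * FreeGroup.of 1)))) :
    memV (trSL (ρ (φ (FreeGroup.of 0)))) (trSL (ρ (φ (FreeGroup.of 1))))
      (trSL (ρ (φ (FreeGroup.of 0 * FreeGroup.of 1)))) := by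
  have hcl : Subgroup.closure {ρ (φ (FreeGroup.of 0)), ρ (φ (FreeGroup.of 1))} =
      Subgroup.closure {ρ (FreeGroup.of 0), ρ (FreeGroup.of 1)} := by
    refine (closure_pair_eq_range (ρ.comp φ.toMonoidHom)).trans ?_
    rw [closure_pair_eq_range ρ, MonoidHom.range_comp, MonoidHom.range_eq_top.2 φ.surjective,
      ← MonoidHom.range_eq_map]
  simp only [map_mul] at hV ⊢
  exact memV_trSL_of_closure_eq_of_memV hcl hV
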